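/- arXiv:2405.07254 — 4 statements merged into one kernel-verified Lean document; each statement's English description precedes it below -/
import Mathlib

section
/- Let X ∈ Mat(n,K) satisfy D_k(X) ≠ 0 for all 1 ≤ k ≤ n. Then there exist matrices u₁, u₂ ∈ UT(n) such that u₁ X u₂⁻¹ is anti-diagonal, i.e. u₁ X u₂⁻¹ ∈ Λ(n). In particular, u₁X is lower anti-triangular and X u₂⁻¹ is upper anti-triangular. -/
open Matrix

/-- Entry of an `n × n` matrix in 1-based indexing; `0` outside the range `[1,n]²`. -/
def ent {R : Type*} [Zero R] {n : ℕ} (X : Matrix (Fin n) (Fin n) R) (a b : ℕ) : R :=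
  if h : 1 ≤ a ∧ a ≤ n ∧ 1 ≤ b ∧ b ≤ n then X ⟨a - 1, by omega⟩ ⟨b - 1, by omega⟩ else 0

/-- `Dmin k X`: the left lower corner minor of order `n - k + 1`;
rows `k,…,n`, columns `1,…,n-k+1` (1-based). -/
noncomputable def Dmin {R : Type*} [CommRing R] {n : ℕ} (k : ℕ)
    (X : Matrix (Fin n) (Fin n) R) : R :=
  (Matrix.of fun r c : Fin (n + 1 - k) => ent X (k + r.val) (1 + c.val)).det

/-- `Mmin i j X`: minor of order `n - i + 1` with rows `i,…,n` and
columns `1,…,n-i` together with column `j` (1-based). -/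
noncomputable def Mmin {R : Type*} [CommRing R] {n : ℕ} (i j : ℕ)
    (X : Matrix (Fin n) (Fin n) R) : R :=
  (Matrix.of fun r c : Fin (n + 1 - i) =>
    ent X (i + r.val) (if c.val < n - i then 1 + c.val else j)).det

/-- `Nmin j k Y`: minor of order `n - k + 1` with rows `{j} ∪ {k+1,…,n}` and
columns `1,…,n-k+1` (1-based). -/
noncomputable def Nmin {R : Type*} [CommRing R] {n : ℕ} (j k : ℕ)
    (Y : Matrix (Fin n) (Fin n) R) : R :=
  (Matrix.of fun r c : Fin (n + 1 - k) =>
    ent Y (if r.val = 0 then j else k + r.val) (1 + c.val)).det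

/-- `Pmin i k X Y = Σ_{j=i'}^{k} M_{ij}(X) N_{jk}(Y)`, where `i' = n - i + 1`. -/
noncomputable def Pmin {R : Type*} [CommRing R] {n : ℕ} (i k : ℕ)
    (X Y : Matrix (Fin n) (Fin n) R) : R :=
  ∑ j ∈ Finset.Icc (n + 1 - i) k, Mmin i j X * Nmin j k Y

/-- `Rminus i k X Y`: determinant of the `k × k` matrix whose first `n - i + 1` rows are
rows `i,…,n` of `X` restricted to columns `1,…,k`, and whose remaining rows are the last
`k - (n - i + 1)` rows of `Y` restricted to columns `1,…,k`. -/
noncomputable def Rminus {R : Type*} [CommRing R] {n : ℕ} (i k : ℕ)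
    (X Y : Matrix (Fin n) (Fin n) R) : R :=
  (Matrix.of fun r c : Fin k =>
    if r.val < n + 1 - i then ent X (i + r.val) (1 + c.val)
    else ent Y (n - k + 1 + r.val) (1 + c.val)).det

/-- `Rplus i k Z X`: determinant of the `(n-i+1) × (n-i+1)` matrix whose first
`(n-i+1) - k` columns are columns `1,…,(n-i+1)-k` of `Z` restricted to rows `i,…,n`,
and whose last `k` columns are columns `1,…,k` of `X` restricted to rows `i,…,n`. -/
noncomputable def Rplus {R : Type*} [CommRing R] {n : ℕ} (i k : ℕ)
    (Z X : Matrix (Fin n) (Fin n) R) : R :=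
  (Matrix.of fun r c : Fin (n + 1 - i) =>
    if c.val < n + 1 - i - k then ent Z (i + r.val) (1 + c.val)
    else ent X (i + r.val) (c.val - (n + 1 - i - k) + 1)).det

/-- Square minor of order `m` with rows `r₀, r₀+1, …` and columns `c₀, c₀+1, …` (1-based). -/
noncomputable def RectMinor {R : Type*} [CommRing R] {n : ℕ} (r₀ c₀ m : ℕ)
    (X : Matrix (Fin n) (Fin n) R) : R :=
  (Matrix.of fun r c : Fin m => ent X (r₀ + r.val) (c₀ + c.val)).det

/-- `u` is upper triangular with ones on the diagonal. -/
def IsUT {R : Type*} [CommRing R] {n : ℕ} (u : Matrix (Fin n) (Fin n) R) : Prop :=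
  (∀ i, u i i = 1) ∧ ∀ i j : Fin n, (j : ℕ) < (i : ℕ) → u i j = 0

/-- Anti-diagonal matrix: entries off the anti-diagonal vanish (0-based: `a + b = n - 1`). -/
def AntiDiag {R : Type*} [Zero R] {n : ℕ} (X : Matrix (Fin n) (Fin n) R) : Prop :=
  ∀ a b : Fin n, (a : ℕ) + (b : ℕ) ≠ n - 1 → X a b = 0

/-- Lower anti-triangular: entries above the anti-diagonal vanish. -/
def LowerAnti {R : Type*} [Zero R] {n : ℕ} (X : Matrix (Fin n) (Fin n) R) : Prop :=
  ∀ a b : Fin n, (a : ℕ) + (b : ℕ) < n - 1 → X a b = 0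

/-- Upper anti-triangular: entries below the anti-diagonal vanish. -/
def UpperAnti {R : Type*} [Zero R] {n : ℕ} (X : Matrix (Fin n) (Fin n) R) : Prop :=
  ∀ a b : Fin n, n - 1 < (a : ℕ) + (b : ℕ) → X a b = 0

/-! Column `b` (0-based) of `u₂⁻¹` is `e_b` plus a combination of `e_0, …, e_{b-1}` chosen to
kill the bottom `b` entries of column `b` of `X u₂⁻¹`: a linear system whose matrix is the
bottom-left `b × b` corner of `X`, with determinant `D_{n+1-b}(X)`. Symmetrically, row `a` of `u₁`
is `e_a` plus a combination of `e_{a+1}, …, e_{n-1}` killing the first `n-1-a` entries of row `a`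
of `u₁ X`, with corner `D_{a+2}(X)`. Multiplying by unitriangular matrices preserves both
anti-triangular shapes, so `u₁ X u₂⁻¹` is lower and upper anti-triangular, i.e. anti-diagonal. -/

open Function

theorem Matrix.exists_mulVec_eq_zero_of_isUnit_det_submatrix {R m ι κ : Type*} [CommRing R]
    [Fintype ι] [DecidableEq ι] [Fintype κ] [DecidableEq κ]
    (A : Matrix m κ R) {r : ι → m} {s : ι → κ} (hs : Injective s) {i : κ} (hi : i ∉ Set.range s)
    (hA : IsUnit (A.submatrix r s).det) :
    ∃ v : κ → R, v i = 1 ∧ (∀ k, k ≠ i → k ∉ Set.range s → v k = 0) ∧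
      ∀ j, (A *ᵥ v) (r j) = 0 := by
  obtain ⟨w, hw⟩ := mulVec_surjective_iff_isUnit.mpr ((isUnit_iff_isUnit_det _).mpr hA)
    (-fun j => A (r j) i)
  refine ⟨extend s w 0 + Pi.single i 1, ?_, fun k hki hks => ?_, fun j => ?_⟩
  · simp [extend_apply' _ _ _ hi]
  · simp [extend_apply' _ _ _ hks, hki]
  · have hsum : (A *ᵥ extend s w 0) (r j) = ((A.submatrix r s) *ᵥ w) j := by
      simp only [mulVec, dotProduct, submatrix_apply]
      refine (Fintype.sum_of_injective s hs _ _ (fun k hk => ?_) (fun l => ?_)).symm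
      · rw [extend_apply' _ _ _ hk, Pi.zero_apply, mul_zero]
      · rw [hs.extend_apply]
    rw [mulVec_add, Pi.add_apply, hsum, hw, mulVec_single_one]
    simp

theorem Dmin_eq_det_submatrix {R : Type*} [CommRing R] {n : ℕ} (X : Matrix (Fin n) (Fin n) R)
    {k : ℕ} (hk : 1 ≤ k) :
    Dmin k X = (X.submatrix (fun j : Fin (n + 1 - k) => ⟨k - 1 + j, by have := j.2; omega⟩)
      (fun j : Fin (n + 1 - k) => ⟨j, by have := j.2; omega⟩)).det := by
  unfold Dmin
  congr 1
  ext j l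
  rw [of_apply, ent, dif_pos (by omega)]
  congr 1 <;> ext <;> dsimp only <;> omega

theorem Dmin_eq_one {R : Type*} [CommRing R] {n : ℕ} (X : Matrix (Fin n) (Fin n) R)
    {k : ℕ} (hk : n < k) : Dmin k X = 1 :=
  det_eq_one_of_card_eq_zero (by simp; omega)

section Unitriangular

variable {R : Type*} [CommRing R] {n : ℕ} {u M : Matrix (Fin n) (Fin n) R}

theorem IsUT.isUpperTriangular (hu : IsUT u) : u.IsUpperTriangular :=
  fun i j hij => hu.2 i j hij

theorem IsUT.det_eq_one (hu : IsUT u) : u.det = 1 := by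
  rw [det_of_isUpperTriangular hu.isUpperTriangular]
  exact Finset.prod_eq_one fun i _ => hu.1 i

theorem IsUT.isUnit_det (hu : IsUT u) : IsUnit u.det := by
  rw [hu.det_eq_one]
  exact isUnit_one

theorem IsUT.inv (hu : IsUT u) : IsUT u⁻¹ := by
  have htri : u⁻¹.IsUpperTriangular := by
    have := u.invertibleOfIsUnitDet hu.isUnit_det
    exact blockTriangular_inv_of_blockTriangular hu.isUpperTriangular
  refine ⟨fun i => ?_, fun i j hij => htri hij⟩
  have hdiag := congr_fun₂ (nonsing_inv_mul u hu.isUnit_det) i i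
  rwa [mul_apply, Finset.sum_eq_single i (fun k _ hki => ?_) (by simp), hu.1, mul_one,
    one_apply_eq] at hdiag
  rcases lt_or_gt_of_ne hki with hki | hik
  · rw [htri hki, zero_mul]
  · rw [hu.2 k i hik, mul_zero]

theorem LowerAnti.mul_isUT (hM : LowerAnti M) (hu : IsUT u) : LowerAnti (M * u) := by
  intro a b hab
  rw [mul_apply]
  refine Finset.sum_eq_zero fun k _ => ?_
  rcases lt_or_ge ((a : ℕ) + k) (n - 1) with hak | hak
  · rw [hM a k hak, zero_mul]
  · rw [hu.2 k b (by omega), mul_zero]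

theorem UpperAnti.isUT_mul (hM : UpperAnti M) (hu : IsUT u) : UpperAnti (u * M) := by
  intro a b hab
  rw [mul_apply]
  refine Finset.sum_eq_zero fun k _ => ?_
  rcases lt_or_ge (k : ℕ) a with hka | hka
  · rw [hu.2 a k hka, zero_mul]
  · rw [hM k b (by omega), mul_zero]

theorem AntiDiag.of_lowerAnti_of_upperAnti (hl : LowerAnti M) (hu : UpperAnti M) :
    AntiDiag M := fun a b hab => (lt_or_gt_of_ne hab).elim (hl a b) (hu a b)

end Unitriangular

section Field

variable {K : Type*} [Field K] {n : ℕ}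

theorem isUnit_Dmin (X : Matrix (Fin n) (Fin n) K) (hX : ∀ k, 2 ≤ k → k ≤ n → Dmin k X ≠ 0)
    {k : ℕ} (hk : 2 ≤ k) : IsUnit (Dmin k X) := by
  rcases le_or_gt k n with hkn | hnk
  · exact isUnit_iff_ne_zero.mpr (hX k hk hkn)
  · rw [Dmin_eq_one X hnk]
    exact isUnit_one

theorem exists_isUT_upperAnti_mul_right (X : Matrix (Fin n) (Fin n) K)
    (hX : ∀ k, 2 ≤ k → k ≤ n → Dmin k X ≠ 0) : ∃ U, IsUT U ∧ UpperAnti (X * U) := by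
  have hcol (b : Fin n) : ∃ v : Fin n → K, v b = 1 ∧ (∀ k, b < k → v k = 0) ∧
      ∀ a : Fin n, n - 1 < (a : ℕ) + b → (X *ᵥ v) a = 0 := by
    have hA := isUnit_Dmin X hX (k := n + 1 - b) (by omega)
    rw [Dmin_eq_det_submatrix X (by omega)] at hA
    obtain ⟨v, hvb, hv0, hvX⟩ := X.exists_mulVec_eq_zero_of_isUnit_det_submatrix
      (fun j l h => Fin.ext (by simpa [Fin.ext_iff] using h)) (i := b)
      (by rintro ⟨j, hj⟩; simp only [Fin.ext_iff] at hj; omega) hA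
    refine ⟨v, hvb, fun k hbk => hv0 k (ne_of_gt hbk) ?_, fun a hab => ?_⟩
    · rintro ⟨j, rfl⟩
      simp only [Fin.lt_def] at hbk
      omega
    · convert hvX ⟨a - (n - b), by omega⟩
      dsimp only
      omega
  choose v hvb hv0 hvX using hcol
  exact ⟨of fun k b => v b k, ⟨hvb, fun k b hbk => hv0 b k hbk⟩, fun a b hab => hvX b a hab⟩

theorem exists_isUT_lowerAnti_mul_left (X : Matrix (Fin n) (Fin n) K)
    (hX : ∀ k, 2 ≤ k → k ≤ n → Dmin k X ≠ 0) : ∃ u, IsUT u ∧ LowerAnti (u * X) := by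
  have hrow (a : Fin n) : ∃ v : Fin n → K, v a = 1 ∧ (∀ k, k < a → v k = 0) ∧
      ∀ b : Fin n, (a : ℕ) + b < n - 1 → (v ᵥ* X) b = 0 := by
    have hA := isUnit_Dmin X hX (k := a + 2) (by omega)
    rw [Dmin_eq_det_submatrix X (by omega), ← det_transpose, transpose_submatrix] at hA
    obtain ⟨v, hva, hv0, hvX⟩ := Xᵀ.exists_mulVec_eq_zero_of_isUnit_det_submatrix
      (fun j l h => Fin.ext (by simpa [Fin.ext_iff] using h)) (i := a)
      (by rintro ⟨j, hj⟩; simp only [Fin.ext_iff] at hj; omega) hA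
    refine ⟨v, hva, fun k hka => hv0 k (ne_of_lt hka) ?_, fun b hab => ?_⟩
    · rintro ⟨j, rfl⟩
      simp only [Fin.lt_def] at hka
      omega
    · rw [← mulVec_transpose]
      exact hvX ⟨b, by omega⟩
  choose v hva hv0 hvX using hrow
  exact ⟨of fun a k => v a k, ⟨hva, fun a k hka => hv0 a k hka⟩, fun a b hab => hvX a b hab⟩

end Field

theorem exists_unitriangular_antidiagonal_general {K : Type*} [Field K] {n : ℕ}
    (X : Matrix (Fin n) (Fin n) K) (hX : ∀ k : ℕ, 1 ≤ k → k ≤ n → Dmin k X ≠ 0) :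
    ∃ u₁ u₂ : Matrix (Fin n) (Fin n) K, IsUT u₁ ∧ IsUT u₂ ∧
      AntiDiag (u₁ * X * u₂⁻¹) ∧ LowerAnti (u₁ * X) ∧ UpperAnti (X * u₂⁻¹) := by
  have hX₂ : ∀ k, 2 ≤ k → k ≤ n → Dmin k X ≠ 0 := fun k hk => hX k (by omega)
  obtain ⟨U, hU, hXU⟩ := exists_isUT_upperAnti_mul_right X hX₂
  obtain ⟨u, hu, huX⟩ := exists_isUT_lowerAnti_mul_left X hX₂
  refine ⟨u, U⁻¹, hu, hU.inv, ?_⟩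
  rw [nonsing_inv_nonsing_inv U hU.isUnit_det]
  refine ⟨.of_lowerAnti_of_upperAnti (huX.mul_isUT hU) ?_, huX, hXU⟩
  rw [mul_assoc]
  exact hXU.isUT_mul hu

/-- if all the corner minors `D_k(X)` are nonzero, then `X` can be brought to
anti-diagonal form by unitriangular matrices: `u₁ * X * u₂⁻¹ ∈ Λ(n)`; in particular
`u₁ * X` is lower anti-triangular and `X * u₂⁻¹` is upper anti-triangular. -/
theorem exists_unitriangular_antidiagonal {K : Type*} [Field K] {n : ℕ} (hn : 1 ≤ n)
    (X : Matrix (Fin n) (Fin n) K) (hX : ∀ k : ℕ, 1 ≤ k → k ≤ n → Dmin k X ≠ 0) :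
    ∃ u₁ u₂ : Matrix (Fin n) (Fin n) K, IsUT u₁ ∧ IsUT u₂ ∧
      AntiDiag (u₁ * X * u₂⁻¹) ∧ LowerAnti (u₁ * X) ∧ UpperAnti (X * u₂⁻¹) :=
  exists_unitriangular_antidiagonal_general X hX
end

section
/- For all X, Y ∈ Mat(n,K), all g₁, g₂, g₃ ∈ UT(n), and every pair (i,k) with i' < k, one has R⁻_{ik}(g₁ X g₂⁻¹, g₃ Y g₂⁻¹) = R⁻_{ik}(X,Y). -/
open Matrix

/-! The matrix whose determinant is `R⁻_{ik}(X, Y)` stacks the last `i'` rows of `X` on the last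
`k - i'` rows of `Y`, cut down to the first `k` columns. For unitriangular `g`, the last `m` rows
of `g Z` are the last `m` rows of `Z` multiplied on the left by the (unitriangular) bottom-right
`m × m` block of `g`, and the first `k` columns of `Z g` are those of `Z` multiplied on the right
by the (unitriangular) top-left `k × k` block of `g`. So passing from `(X, Y)` to `(g₁ X, g₃ Y)`
multiplies the stacked matrix on the left by a block-diagonal unitriangular matrix, and passing to
`(X g, Y g)` multiplies it on the right by a unitriangular one; neither changes the determinant. -/

def finTail {m n : ℕ} (h : m ≤ n) (r : Fin m) : Fin n := ⟨n - m + r, by omega⟩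

theorem finTail_strictMono {m n : ℕ} (h : m ≤ n) : StrictMono (finTail h) := fun a b hab => by
  simp only [finTail, Fin.mk_lt_mk]
  omega

theorem range_finTail {m n : ℕ} (h : m ≤ n) :
    Set.range (finTail h) = {t : Fin n | n - m ≤ (t : ℕ)} := by
  ext t
  simp only [Set.mem_range, Set.mem_ofPred_eq]
  refine ⟨fun ⟨r, hr⟩ => hr ▸ Nat.le_add_right _ _, fun ht => ?_⟩
  exact ⟨⟨t - (n - m), by omega⟩, Fin.ext (by simp only [finTail]; omega)⟩

def finSplit {p k : ℕ} (h : p ≤ k) : Fin k ≃ Fin p ⊕ Fin (k - p) :=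
  (finCongr (Nat.add_sub_cancel' h).symm).trans finSumFinEquiv.symm

theorem finSplit_apply_of_lt {p k : ℕ} (h : p ≤ k) (r : Fin k) (hr : (r : ℕ) < p) :
    finSplit h r = Sum.inl ⟨r, hr⟩ := by
  have hr' : Fin.cast (Nat.add_sub_cancel' h).symm r = Fin.castAdd (k - p) ⟨r, hr⟩ := rfl
  rw [finSplit, Equiv.trans_apply, finCongr_apply, hr', finSumFinEquiv_symm_apply_castAdd]

theorem finSplit_apply_of_le {p k : ℕ} (h : p ≤ k) (r : Fin k) (hr : p ≤ (r : ℕ)) :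
    finSplit h r = Sum.inr ⟨r - p, by omega⟩ := by
  have hr' : Fin.cast (Nat.add_sub_cancel' h).symm r = Fin.natAdd p ⟨r - p, by omega⟩ :=
    Fin.ext (by simp only [Fin.val_cast, Fin.natAdd_mk]; omega)
  rw [finSplit, Equiv.trans_apply, finCongr_apply, hr', finSumFinEquiv_symm_apply_natAdd]

namespace Matrix

theorem submatrix_mul_of_injective {α l m o l' m' o' : Type*} [NonUnitalNonAssocSemiring α]
    [Fintype m] [Fintype m'] (A : Matrix l m α) (B : Matrix m o α) (f : l' → l) {e : m' → m}
    (he : Function.Injective e) (g : o' → o)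
    (h : ∀ r c, ∀ t ∉ Set.range e, A (f r) t * B t (g c) = 0) :
    (A * B).submatrix f g = A.submatrix f e * B.submatrix e g := by
  ext r c
  exact (Fintype.sum_of_injective e he _ _ (h r c) fun _ => rfl).symm

end Matrix

namespace IsUT

variable {R : Type*} [CommRing R] {n : ℕ} {u : Matrix (Fin n) (Fin n) R}

theorem det_submatrix_eq_one (hu : IsUT u) {m : ℕ} {e : Fin m → Fin n} (he : StrictMono e) :
    (u.submatrix e e).det = 1 := by
  rw [det_of_isUpperTriangular (M := u.submatrix e e) fun a b hab => hu.2 _ _ (he hab)]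
  simp [hu.1]

theorem det_eq_one_s7 (hu : IsUT u) : u.det = 1 := by
  simpa using hu.det_submatrix_eq_one strictMono_id

theorem mul_submatrix_finTail (hu : IsUT u) {o o' : Type*} (A : Matrix (Fin n) o R) {m : ℕ}
    (h : m ≤ n) (g : o' → o) :
    (u * A).submatrix (finTail h) g =
      u.submatrix (finTail h) (finTail h) * A.submatrix (finTail h) g := by
  refine submatrix_mul_of_injective _ _ _ (finTail_strictMono h).injective _ fun r c t ht => ?_
  have : (t : ℕ) + m < n := by simpa [range_finTail] using ht
  rw [hu.2 _ _ (by simp only [finTail]; omega), zero_mul]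

theorem submatrix_mul_castLE (hu : IsUT u) {l l' : Type*} (A : Matrix l (Fin n) R) (f : l' → l)
    {k : ℕ} (h : k ≤ n) :
    (A * u).submatrix f (Fin.castLE h) =
      A.submatrix f (Fin.castLE h) * u.submatrix (Fin.castLE h) (Fin.castLE h) := by
  refine submatrix_mul_of_injective _ _ _ (Fin.castLE_injective h) _ fun r c t ht => ?_
  have : k ≤ (t : ℕ) := by simpa [Fin.range_castLE] using ht
  rw [hu.2 _ _ (by simp only [Fin.val_castLE]; omega), mul_zero]

end IsUT

section Rminus

variable {R : Type*} [CommRing R] {n : ℕ}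

def stackLastRows (X Y : Matrix (Fin n) (Fin n) R) {p q k : ℕ} (hp : p ≤ n) (hq : q ≤ n)
    (hk : k ≤ n) : Matrix (Fin p ⊕ Fin q) (Fin k) R :=
  fromRows (X.submatrix (finTail hp) (Fin.castLE hk)) (Y.submatrix (finTail hq) (Fin.castLE hk))

theorem Rminus_eq_det_stackLastRows (X Y : Matrix (Fin n) (Fin n) R) {i k : ℕ} (hi : 1 ≤ i)
    (hk : k ≤ n) (hik : n + 1 - i ≤ k) :
    Rminus i k X Y =
      ((stackLastRows X Y (by omega) (by omega) hk).submatrix (finSplit hik) id).det := by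
  unfold Rminus
  congr 1
  ext r c
  simp only [stackLastRows, of_apply, submatrix_apply, id]
  split_ifs with hr
  · rw [finSplit_apply_of_lt hik r hr, ent, dif_pos (by omega)]
    exact congr_arg₂ X (Fin.ext (by simp only [finTail]; omega)) (Fin.ext (by simp))
  · rw [finSplit_apply_of_le hik r (by omega), ent, dif_pos (by omega)]
    exact congr_arg₂ Y (Fin.ext (by simp only [finTail]; omega)) (Fin.ext (by simp))

section

variable {p q k : ℕ} (hp : p ≤ n) (hq : q ≤ n) (hk : k ≤ n)

theorem stackLastRows_mul_right (X Y u : Matrix (Fin n) (Fin n) R) (hu : IsUT u) :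
    stackLastRows (X * u) (Y * u) hp hq hk =
      stackLastRows X Y hp hq hk * u.submatrix (Fin.castLE hk) (Fin.castLE hk) := by
  simp only [stackLastRows, fromRows_mul, hu.submatrix_mul_castLE]

theorem stackLastRows_mul_left (X Y g₁ g₃ : Matrix (Fin n) (Fin n) R) (h₁ : IsUT g₁)
    (h₃ : IsUT g₃) :
    stackLastRows (g₁ * X) (g₃ * Y) hp hq hk =
      fromBlocks (g₁.submatrix (finTail hp) (finTail hp)) 0 0
        (g₃.submatrix (finTail hq) (finTail hq)) * stackLastRows X Y hp hq hk := by
  simp only [stackLastRows, fromBlocks_mul_fromRows, h₁.mul_submatrix_finTail,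
    h₃.mul_submatrix_finTail, Matrix.zero_mul, add_zero, zero_add]

end

variable {i k : ℕ}

theorem Rminus_mul_right (X Y u : Matrix (Fin n) (Fin n) R) (hu : IsUT u) (hi : 1 ≤ i)
    (hk : k ≤ n) (hik : n + 1 - i ≤ k) :
    Rminus i k (X * u) (Y * u) = Rminus i k X Y := by
  rw [Rminus_eq_det_stackLastRows _ _ hi hk hik, Rminus_eq_det_stackLastRows _ _ hi hk hik,
    stackLastRows_mul_right _ _ _ _ _ _ hu, submatrix_mul _ _ _ id _ Function.bijective_id,
    det_mul, submatrix_id_id, hu.det_submatrix_eq_one (Fin.strictMono_castLE hk), mul_one]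

theorem Rminus_mul_left (X Y g₁ g₃ : Matrix (Fin n) (Fin n) R) (h₁ : IsUT g₁) (h₃ : IsUT g₃)
    (hi : 1 ≤ i) (hk : k ≤ n) (hik : n + 1 - i ≤ k) :
    Rminus i k (g₁ * X) (g₃ * Y) = Rminus i k X Y := by
  rw [Rminus_eq_det_stackLastRows _ _ hi hk hik, Rminus_eq_det_stackLastRows _ _ hi hk hik,
    stackLastRows_mul_left _ _ _ _ _ _ _ h₁ h₃, submatrix_mul _ _ _ _ _ (finSplit hik).bijective,
    det_mul, det_submatrix_equiv_self, det_fromBlocks_zero₂₁,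
    h₁.det_submatrix_eq_one (finTail_strictMono _), h₃.det_submatrix_eq_one (finTail_strictMono _),
    one_mul, one_mul]

end Rminus

theorem Rminus_unitriangular_invariant_general {K : Type*} [Field K] {n : ℕ}
    (X Y g₁ g₂ g₃ : Matrix (Fin n) (Fin n) K)
    (h₁ : IsUT g₁) (h₂ : IsUT g₂) (h₃ : IsUT g₃)
    (i k : ℕ) (hi1 : 1 ≤ i) (hk : k ≤ n) (hik : n + 1 - i < k) :
    Rminus i k (g₁ * X * g₂⁻¹) (g₃ * Y * g₂⁻¹) = Rminus i k X Y := by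
  have hg₂ : g₂⁻¹ * g₂ = 1 := nonsing_inv_mul g₂ (by rw [h₂.det_eq_one_s7]; exact isUnit_one)
  calc Rminus i k (g₁ * X * g₂⁻¹) (g₃ * Y * g₂⁻¹)
      = Rminus i k (g₁ * X * g₂⁻¹ * g₂) (g₃ * Y * g₂⁻¹ * g₂) :=
        (Rminus_mul_right _ _ _ h₂ hi1 hk hik.le).symm
    _ = Rminus i k (g₁ * X) (g₃ * Y) := by simp only [Matrix.mul_assoc, hg₂, Matrix.mul_one]
    _ = Rminus i k X Y := Rminus_mul_left _ _ _ _ h₁ h₃ hi1 hk hik.le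

/-- the polynomials `R⁻_{ik}` are `U`-invariants:
`R⁻_{ik}(g₁ X g₂⁻¹, g₃ Y g₂⁻¹) = R⁻_{ik}(X, Y)` for unitriangular `g₁, g₂, g₃`
and every pair `(i,k)` with `i' = n - i + 1 < k`. -/
theorem Rminus_unitriangular_invariant {K : Type*} [Field K] {n : ℕ} (hn : 1 ≤ n)
    (X Y g₁ g₂ g₃ : Matrix (Fin n) (Fin n) K)
    (h₁ : IsUT g₁) (h₂ : IsUT g₂) (h₃ : IsUT g₃)
    (i k : ℕ) (hi1 : 1 ≤ i) (hi2 : i ≤ n) (hk : k ≤ n) (hik : n + 1 - i < k) :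
    Rminus i k (g₁ * X * g₂⁻¹) (g₃ * Y * g₂⁻¹) = Rminus i k X Y :=
  Rminus_unitriangular_invariant_general X Y g₁ g₂ g₃ h₁ h₂ h₃ i k hi1 hk hik
end

section
/- Fix (i,k) with i' < k and regard P_{ik}(Z,X) as a polynomial in the 2n² variables z_{ab}, x_{ab}. Then P_{ik}(Z,X) = f₀·x_{i',k'} + f₁, where f₀ and f₁ are polynomials involving only the variables z_{ab} and the variables x_{ab} with (a,b) ≺ (i',k'), and f₀ is a nonzero polynomial. (Note (i',k') lies above the anti-diagonal when (i,k) lies below it; order on pairs: (a,b) ≺ (c,d) iff b < d, or b = d and a > c.) -/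
open Matrix

/-! Of the minors `N_{jk}(X)`, `j = i', …, k`, only `N_{i'k}` involves `x_{i'k'}`, and only as
the entry in position `(1, k')`. Expanding `N_{i'k}` linearly in its first row gives
`P_{ik} = M_{ii'}(Z) · C · x_{i'k'} + (rest)`, with `C` the cofactor of that position; apart from
the `z`'s, only `x`'s in columns left of `k'` or in column `k'` strictly below row `i'` remain.
Both `M_{ii'}(Z)`, the lower-left corner minor of `Z`, and `C` are, up to sign, determinants of
matrices of distinct indeterminates, i.e. renamings of the generic determinant, hence nonzero. -/

open MvPolynomial

namespace Matrix

variable {ι R : Type*} [Fintype ι] [DecidableEq ι]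

theorem det_mem_of_forall_mem [CommRing R] {S : Type*} [SetLike S R] [SubringClass S R]
    (s : S) (A : Matrix ι ι R) (hA : ∀ a b, A a b ∈ s) : A.det ∈ s := by
  rw [det_apply]
  refine sum_mem fun σ _ => ?_
  rw [Units.smul_def]
  exact zsmul_mem (prod_mem fun a _ => hA _ _) _

theorem det_updateRow_eq_add_mul_adjugate [CommRing R] (A : Matrix ι ι R) (r : ι) (v : ι → R)
    (c : ι) :
    (A.updateRow r v).det = (A.updateRow r (Function.update v c 0)).det + v c * adjugate A c r := by
  have hv : v = Function.update v c 0 + v c • Pi.single c 1 := by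
    ext b
    rcases eq_or_ne b c with rfl | hb <;> simp [*]
  conv_lhs => rw [hv]
  rw [det_updateRow_add, det_updateRow_smul, adjugate_apply]

variable {σ : Type*} [CommRing R] [Nontrivial R]

theorem det_ne_zero_of_eq_X {A : Matrix ι ι (MvPolynomial σ R)} {g : ι × ι → σ}
    (hg : Function.Injective g) (hA : ∀ a b, A a b = X (g (a, b))) : A.det ≠ 0 := by
  have hdet : A.det = rename g (mvPolynomialX ι ι R).det := by
    rw [AlgHom.map_det]
    congr
    ext a b
    simp [hA, mvPolynomialX]
  rw [hdet, Ne, map_eq_zero_iff _ (rename_injective g hg)]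
  exact det_mvPolynomialX_ne_zero ι R

theorem adjugate_apply_ne_zero_of_eq_X {m : ℕ} {A : Matrix (Fin m) (Fin m) (MvPolynomial σ R)}
    {g : Fin m × Fin m → σ} (hg : Function.Injective g) (hA : ∀ a b, A a b = X (g (a, b)))
    (c r : Fin m) : adjugate A c r ≠ 0 := by
  cases m with
  | zero => exact r.elim0
  | succ m =>
    rw [adjugate_fin_succ_eq_det_submatrix, Ne, (isUnit_neg_one.pow _).mul_right_eq_zero]
    refine det_ne_zero_of_eq_X (g := fun p => g (r.succAbove p.1, c.succAbove p.2)) ?_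
      fun a b => hA _ _
    intro p q h
    obtain ⟨h1, h2⟩ := Prod.ext_iff.1 (hg h)
    exact Prod.ext (Fin.succAbove_right_injective h1) (Fin.succAbove_right_injective h2)

end Matrix

theorem ent_mem {R S : Type*} [Zero R] [SetLike S R] [ZeroMemClass S R] {s : S} {n : ℕ}
    {Y : Matrix (Fin n) (Fin n) R} (hY : ∀ a b, Y a b ∈ s) (a b : ℕ) : ent Y a b ∈ s := by
  unfold ent
  split_ifs
  exacts [hY _ _, zero_mem s]

def cornerMatrix {R : Type*} [CommRing R] {n : ℕ} (k : ℕ) (Y : Matrix (Fin n) (Fin n) R) :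
    Matrix (Fin (n + 1 - k)) (Fin (n + 1 - k)) R :=
  Matrix.of fun r c => ent Y (k + r.val) (1 + c.val)

section Minors

variable {R : Type*} [CommRing R] {n : ℕ}

theorem Mmin_eq_Dmin (i : ℕ) (Y : Matrix (Fin n) (Fin n) R) :
    Mmin i (n + 1 - i) Y = Dmin i Y := by
  unfold Mmin Dmin
  congr
  ext r c
  congr 1
  split_ifs <;> omega

theorem Nmin_eq_det_updateRow_cornerMatrix (j : ℕ) {k : ℕ} (hk : k ≤ n)
    (Y : Matrix (Fin n) (Fin n) R) :
    Nmin j k Y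
      = ((cornerMatrix k Y).updateRow ⟨0, by omega⟩ fun c => ent Y j (1 + c.val)).det := by
  rw [Nmin]
  congr 1
  ext r c
  rw [updateRow_apply, cornerMatrix, of_apply, of_apply]
  split_ifs <;> simp_all [Fin.ext_iff]

theorem Nmin_eq_add_mul_adjugate (j : ℕ) {k : ℕ} (hk : k ≤ n) (Y : Matrix (Fin n) (Fin n) R) :
    Nmin j k Y = ((cornerMatrix k Y).updateRow ⟨0, by omega⟩
        (Function.update (fun c => ent Y j (1 + c.val)) ⟨n - k, by omega⟩ 0)).det
      + ent Y j (n + 1 - k)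
        * adjugate (cornerMatrix k Y) ⟨n - k, by omega⟩ ⟨0, by omega⟩ := by
  rw [Nmin_eq_det_updateRow_cornerMatrix _ hk, Matrix.det_updateRow_eq_add_mul_adjugate _ _ _
    ⟨n - k, by omega⟩]
  congr 3
  dsimp only
  omega

end Minors

section GenericMatrix

variable {σ R : Type*} [CommRing R] {n : ℕ} (e : Fin n × Fin n → σ)

theorem ent_of_X {a b : ℕ} (ha1 : 1 ≤ a) (ha2 : a ≤ n) (hb1 : 1 ≤ b) (hb2 : b ≤ n) :
    ent (Matrix.of fun a b => (X (e (a, b)) : MvPolynomial σ R)) a b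
      = X (e (⟨a - 1, by omega⟩, ⟨b - 1, by omega⟩)) :=
  dif_pos ⟨ha1, ha2, hb1, hb2⟩

variable {e}

theorem exists_injective_cornerMatrix_of_X_eq (he : Function.Injective e) {k : ℕ} (hk : 1 ≤ k) :
    ∃ g : Fin (n + 1 - k) × Fin (n + 1 - k) → σ, Function.Injective g ∧
      ∀ r c, cornerMatrix k (Matrix.of fun a b => (X (e (a, b)) : MvPolynomial σ R)) r c
        = X (g (r, c)) := by
  refine ⟨fun p => e (⟨k + p.1 - 1, by omega⟩, ⟨p.2, by omega⟩), fun p q h => ?_,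
    fun r c => ?_⟩
  · obtain ⟨h1, h2⟩ := Prod.ext_iff.1 (he h)
    simp only [Fin.mk.injEq] at h1 h2
    exact Prod.ext (Fin.ext (by omega)) (Fin.ext h2)
  · rw [cornerMatrix, of_apply, ent_of_X e (by omega) (by omega) (by omega) (by omega)]
    simp

variable [Nontrivial R]

theorem Dmin_of_X_ne_zero (he : Function.Injective e) {k : ℕ} (hk : 1 ≤ k) :
    Dmin k (Matrix.of fun a b => (X (e (a, b)) : MvPolynomial σ R)) ≠ 0 :=
  have ⟨_, hg, hA⟩ := exists_injective_cornerMatrix_of_X_eq (R := R) he hk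
  Matrix.det_ne_zero_of_eq_X hg hA

theorem adjugate_cornerMatrix_of_X_ne_zero (he : Function.Injective e) {k : ℕ} (hk : 1 ≤ k)
    (c r : Fin (n + 1 - k)) :
    adjugate (cornerMatrix k (Matrix.of fun a b => (X (e (a, b)) : MvPolynomial σ R))) c r ≠ 0 :=
  have ⟨_, hg, hA⟩ := exists_injective_cornerMatrix_of_X_eq (R := R) he hk
  Matrix.adjugate_apply_ne_zero_of_eq_X hg hA c r

end GenericMatrix

/-- The `z`-variables together with the `x_{ab}` with `(a, b) ≺ (i', k')`, in 1-based indices. -/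
def precVars (n i k : ℕ) : Set ((Fin n × Fin n) ⊕ (Fin n × Fin n)) :=
  {v | Sum.elim (fun _ : Fin n × Fin n => True) (fun p : Fin n × Fin n =>
    (p.2 : ℕ) + 1 < n + 1 - k ∨
      ((p.2 : ℕ) + 1 = n + 1 - k ∧ n + 1 - i < (p.1 : ℕ) + 1)) v}

section PrecVars

variable {R : Type*} [CommRing R] [Nontrivial R] {n : ℕ} (i k : ℕ)

local notation "Z" =>
  Matrix.of fun a b : Fin n =>
    (X (Sum.inl (a, b)) : MvPolynomial ((Fin n × Fin n) ⊕ (Fin n × Fin n)) R)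
local notation "Y" =>
  Matrix.of fun a b : Fin n =>
    (X (Sum.inr (a, b)) : MvPolynomial ((Fin n × Fin n) ⊕ (Fin n × Fin n)) R)

theorem Mmin_mem_supported_precVars (j : ℕ) : Mmin i j Z ∈ supported R (precVars n i k) :=
  Matrix.det_mem_of_forall_mem _ _ fun _ _ =>
    ent_mem (fun a b => X_mem_supported.2 (show Sum.inl (a, b) ∈ precVars n i k from trivial)) _ _

theorem ent_mem_supported_precVars {a b : ℕ}
    (hab : b < n + 1 - k ∨ (b = n + 1 - k ∧ n + 1 - i < a)) :
    ent Y a b ∈ supported R (precVars n i k) := by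
  unfold ent
  split_ifs with h
  · exact X_mem_supported.2 (by change _ ∨ _; simp only; omega)
  · exact zero_mem _

theorem det_updateRow_cornerMatrix_mem_supported_precVars {i k : ℕ} (hik : n + 1 - i < k)
    (r : Fin (n + 1 - k)) {v : Fin (n + 1 - k) → MvPolynomial _ R}
    (hv : ∀ c, v c ∈ supported R (precVars n i k)) :
    ((cornerMatrix k Y).updateRow r v).det ∈ supported R (precVars n i k) := by
  refine Matrix.det_mem_of_forall_mem _ _ fun a c => ?_
  rw [updateRow_apply]
  split_ifs
  · exact hv c
  · exact ent_mem_supported_precVars i k (by omega)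

theorem adjugate_cornerMatrix_mem_supported_precVars {i k : ℕ} (hik : n + 1 - i < k)
    (c r : Fin (n + 1 - k)) : adjugate (cornerMatrix k Y) c r ∈ supported R (precVars n i k) := by
  rw [adjugate_apply]
  refine det_updateRow_cornerMatrix_mem_supported_precVars hik _ fun b => ?_
  rw [Pi.single_apply]
  split_ifs
  exacts [one_mem _, zero_mem _]

theorem update_ent_mem_supported_precVars (j : ℕ) (hk : k ≤ n) (c : Fin (n + 1 - k)) :
    Function.update (fun c : Fin (n + 1 - k) => ent Y j (1 + c.val)) ⟨n - k, by omega⟩ 0 c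
      ∈ supported R (precVars n i k) := by
  rw [Function.update_apply]
  split_ifs with hc
  · exact zero_mem _
  · have : (c : ℕ) ≠ n - k := fun h => hc (Fin.ext h)
    exact ent_mem_supported_precVars i k (by omega)

theorem Nmin_mem_supported_precVars {i k j : ℕ} (hik : n + 1 - i < k) (hk : k ≤ n)
    (hj : n + 1 - i < j) : Nmin j k Y ∈ supported R (precVars n i k) := by
  rw [Nmin_eq_det_updateRow_cornerMatrix _ hk]
  exact det_updateRow_cornerMatrix_mem_supported_precVars hik _ fun c =>
    ent_mem_supported_precVars i k (by omega)

end PrecVars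

open MvPolynomial in
/-- regarded as a polynomial in the `2n²` variables `z_{ab}, x_{ab}`,
`P_{ik}(Z,X) = f₀ · x_{i',k'} + f₁` (with `i' = n-i+1`, `k' = n-k+1`) where `f₀ ≠ 0` and
`f₀, f₁` involve only the variables `z_{ab}` and the variables `x_{ab}` with
`(a,b) ≺ (i',k')` (`(a,b) ≺ (c,d)` iff `b < d`, or `b = d` and `a > c`).
Here `z`-variables are `Sum.inl` and `x`-variables are `Sum.inr`. -/
theorem Pmin_triangular_above {K : Type*} [Field K] {n : ℕ}
    (i k : ℕ) (hi1 : 1 ≤ i) (hi2 : i ≤ n) (hk : k ≤ n) (hik : n + 1 - i < k) :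
    ∃ f₀ f₁ : MvPolynomial ((Fin n × Fin n) ⊕ (Fin n × Fin n)) K,
      f₀ ≠ 0 ∧
      Pmin i k
          (Matrix.of fun a b : Fin n => (X (Sum.inl (a, b)) : MvPolynomial _ K))
          (Matrix.of fun a b : Fin n => (X (Sum.inr (a, b)) : MvPolynomial _ K))
        = f₀ * X (Sum.inr (⟨n - i, by omega⟩, ⟨n - k, by omega⟩)) + f₁ ∧
      (∀ v ∈ f₀.vars,
        Sum.elim (fun _ : Fin n × Fin n => True) (fun p : Fin n × Fin n =>
          (p.2 : ℕ) + 1 < n + 1 - k ∨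
            ((p.2 : ℕ) + 1 = n + 1 - k ∧ n + 1 - i < (p.1 : ℕ) + 1)) v) ∧
      (∀ v ∈ f₁.vars,
        Sum.elim (fun _ : Fin n × Fin n => True) (fun p : Fin n × Fin n =>
          (p.2 : ℕ) + 1 < n + 1 - k ∨
            ((p.2 : ℕ) + 1 = n + 1 - k ∧ n + 1 - i < (p.1 : ℕ) + 1)) v) := by
  set Z := Matrix.of fun a b : Fin n => (X (Sum.inl (a, b)) : MvPolynomial _ K)
  set Y := Matrix.of fun a b : Fin n => (X (Sum.inr (a, b)) : MvPolynomial _ K)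
  set top : Fin (n + 1 - k) := ⟨0, by omega⟩
  set last : Fin (n + 1 - k) := ⟨n - k, by omega⟩
  have hx : ent Y (n + 1 - i) (n + 1 - k)
      = X (Sum.inr (⟨n - i, by omega⟩, ⟨n - k, by omega⟩)) := by
    rw [ent_of_X _ (by omega) (by omega) (by omega) (by omega)]
    congr 2
    ext <;> simp only <;> omega
  refine ⟨Mmin i (n + 1 - i) Z * adjugate (cornerMatrix k Y) last top,
    Mmin i (n + 1 - i) Z * ((cornerMatrix k Y).updateRow top
        (Function.update (fun c => ent Y (n + 1 - i) (1 + c.val)) last 0)).det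
      + ∑ j ∈ Finset.Ioc (n + 1 - i) k, Mmin i j Z * Nmin j k Y, ?_, ?_, ?_, ?_⟩
  · rw [Mmin_eq_Dmin]
    exact mul_ne_zero (Dmin_of_X_ne_zero Sum.inl_injective hi1)
      (adjugate_cornerMatrix_of_X_ne_zero Sum.inr_injective (by omega) _ _)
  · rw [Pmin, Finset.Icc_eq_cons_Ioc (by omega), Finset.sum_cons,
      Nmin_eq_add_mul_adjugate _ hk, hx]
    ring
  · exact fun v hv => mem_supported.1 (mul_mem (Mmin_mem_supported_precVars i k _)
      (adjugate_cornerMatrix_mem_supported_precVars hik _ _)) hv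
  · refine fun v hv => mem_supported.1 (add_mem (mul_mem (Mmin_mem_supported_precVars i k _)
      (det_updateRow_cornerMatrix_mem_supported_precVars hik _
        (update_ent_mem_supported_precVars i k _ hk)))
      (sum_mem fun j hj => mul_mem (Mmin_mem_supported_precVars i k _)
        (Nmin_mem_supported_precVars hik hk (Finset.mem_Ioc.1 hj).1))) hv
end

section
/- Fix (i,k) with i' > k. There is a sign ε ∈ {+1,−1}, depending only on n, i, k, such that for every X ∈ Mat(n,K) and every lower anti-triangular matrix S⁻ (entries at positions (a,b) with a+b < n+1 are zero), R⁺_{ik}(S⁻, X) = ε · D_{i+k}(S⁻) · N_I^J(X), where N_I^J(X) is the minor of X with rows I = {i,…,i+k−1} and columns J = {1,…,k}. -/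
open Matrix

/-!
Moving the `k` columns taken from `X` in front of the `i' - k` columns taken from `S` is a
column permutation, whose sign depends only on `n, i, k`. Afterwards the first `k` rows vanish
in the columns taken from `S`, because there the 1-based row and column indices of `S` add up
to less than `n + 1`. The matrix is then block lower triangular, with diagonal blocks
`N_I^J(X)` and the minor `D_{i+k}(S)`.
-/

section BlockDeterminant

variable {R : Type*} [CommRing R]

theorem det_submatrix_equiv {ι κ : Type*} [Fintype ι] [DecidableEq ι] [Fintype κ]
    [DecidableEq κ] (M : Matrix ι ι R) (e g : κ ≃ ι) :
    (M.submatrix e g).det = Equiv.Perm.sign (g.trans e.symm) * M.det := by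
  have hperm : M.submatrix e g = (M.submatrix e e).submatrix id (g.trans e.symm) := by
    ext r c
    simp
  rw [hperm, det_permute', det_submatrix_equiv_self]

theorem det_eq_sign_mul_det_mul_det_of_block_eq_zero {ι κ μ : Type*} [Fintype ι] [DecidableEq ι]
    [Fintype κ] [DecidableEq κ] [Fintype μ] [DecidableEq μ] (M : Matrix ι ι R)
    (e g : κ ⊕ μ ≃ ι) (h : ∀ a b, M (e (.inl a)) (g (.inr b)) = 0) :
    M.det = Equiv.Perm.sign (g.symm.trans e) *
      (of fun a a' => M (e (.inl a)) (g (.inl a'))).det *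
      (of fun b b' => M (e (.inr b)) (g (.inr b'))).det := by
  have hblocks : M.submatrix e g = fromBlocks (of fun a a' => M (e (.inl a)) (g (.inl a'))) 0
      (of fun b a => M (e (.inr b)) (g (.inl a))) (of fun b b' => M (e (.inr b)) (g (.inr b'))) := by
    ext (r | r) (c | c) <;> simp [h]
  have hM : M = (M.submatrix e g).submatrix e.symm g.symm := by
    ext r c
    simp
  rw [mul_assoc, ← det_fromBlocks_zero₁₂, ← hblocks]
  conv_lhs => rw [hM, det_submatrix_equiv, Equiv.symm_symm]

end BlockDeterminant

theorem LowerAnti.ent_eq_zero {R : Type*} [Zero R] {n : ℕ} {X : Matrix (Fin n) (Fin n) R}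
    (hX : LowerAnti X) {a b : ℕ} (hab : a + b < n + 1) : ent X a b = 0 := by
  unfold ent
  split_ifs with h
  · exact hX _ _ (by simp only; omega)
  · rfl

theorem Rplus_lowerAnti_general {K : Type*} [Field K] {n : ℕ}
    (i k : ℕ) (hik : k < n + 1 - i) :
    ∃ ε : K, (ε = 1 ∨ ε = -1) ∧
      ∀ X S : Matrix (Fin n) (Fin n) K, LowerAnti S →
        Rplus i k S X = ε * Dmin (i + k) S * RectMinor i 1 k X := by
  set q := n + 1 - (i + k)
  let rows : Fin k ⊕ Fin q ≃ Fin (n + 1 - i) := finSumFinEquiv.trans (finCongr (by omega))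
  let cols : Fin k ⊕ Fin q ≃ Fin (n + 1 - i) :=
    (Equiv.sumComm _ _).trans (finSumFinEquiv.trans (finCongr (by omega)))
  have rows_inl (a : Fin k) : (rows (.inl a) : ℕ) = a := by simp [rows]
  have rows_inr (b : Fin q) : (rows (.inr b) : ℕ) = k + b := by simp [rows]
  have cols_inl (a : Fin k) : (cols (.inl a) : ℕ) = q + a := by simp [cols]
  have cols_inr (b : Fin q) : (cols (.inr b) : ℕ) = b := by simp [cols]
  refine ⟨Equiv.Perm.sign (cols.symm.trans rows), ?_, fun X S hS => ?_⟩
  · rcases Int.units_eq_one_or (Equiv.Perm.sign (cols.symm.trans rows)) with h | h <;> simp [h]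
  rw [Rplus, Dmin, RectMinor, det_eq_sign_mul_det_mul_det_of_block_eq_zero _ rows cols,
    mul_right_comm]
  · congr 3
    · ext r c
      simp only [of_apply, rows_inr, cols_inr]
      rw [if_pos (by omega), add_assoc]
    · ext r c
      simp only [of_apply, rows_inl, cols_inl]
      rw [if_neg (by omega)]
      congr 1
      omega
  · intro a b
    simp only [of_apply, rows_inl, cols_inr]
    rw [if_pos (by omega)]
    exact hS.ent_eq_zero (by omega)

/-- for a lower anti-triangular matrix `S⁻`, `R⁺_{ik}(S⁻, X)` factors as
`± D_{i+k}(S⁻) · N_I^J(X)`, where `I = {i,…,i+k-1}`, `J = {1,…,k}`, `i' = n - i + 1 > k`,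
and the sign depends only on `n, i, k`. -/
theorem Rplus_lowerAnti {K : Type*} [Field K] {n : ℕ} (hn : 1 ≤ n)
    (i k : ℕ) (hi1 : 1 ≤ i) (hi2 : i ≤ n) (hk1 : 1 ≤ k) (hik : k < n + 1 - i) :
    ∃ ε : K, (ε = 1 ∨ ε = -1) ∧
      ∀ X S : Matrix (Fin n) (Fin n) K, LowerAnti S →
        Rplus i k S X = ε * Dmin (i + k) S * RectMinor i 1 k X :=
  Rplus_lowerAnti_general i k hik
end
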